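/- Let B be the ball algebra on the closed unit ball of ℂ^d, and let J ⊆ B be a closed homogeneous ideal. Then there exists N ∈ ℕ such that f^N ∈ J for every f ∈ √J (i.e., for every f ∈ B with f^m ∈ J for some m ≥ 1). -/

import Mathlib

open MvPolynomial Metric

noncomputable section

abbrev Cd (d : ℕ) := EuclideanSpace ℂ (Fin d)

abbrev CBall (d : ℕ) : Set (Cd d) := Metric.closedBall (0 : Cd d) 1

instance (d : ℕ) : CompactSpace (CBall d) :=
  isCompact_iff_compactSpace.mp (isCompact_closedBall _ _)

/-- The `i`-th coordinate function on the closed unit ball. -/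
def coordFn (d : ℕ) (i : Fin d) : C(CBall d, ℂ) :=
  ⟨fun z => (z : Cd d) i, by fun_prop⟩

/-- Restriction of a polynomial to the closed unit ball, as an element of
`C(closedBall, ℂ)`. -/
def polyMap (d : ℕ) : MvPolynomial (Fin d) ℂ →ₐ[ℂ] C(CBall d, ℂ) :=
  aeval (coordFn d)

/-- The ball algebra: the closure, in the Banach algebra of continuous functions on
the closed unit ball of ℂ^d with the supremum norm, of the restrictions of
polynomials. -/
def ballAlg (d : ℕ) : Set C(CBall d, ℂ) := closure (Set.range (polyMap d))

/-- `J` is an ideal of the ball algebra `B`. -/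
def IsIdealOfBallAlg (d : ℕ) (J : Set C(CBall d, ℂ)) : Prop :=
  J ⊆ ballAlg d ∧ (0 : C(CBall d, ℂ)) ∈ J ∧
    (∀ f ∈ J, ∀ g ∈ J, f + g ∈ J) ∧ (∀ f ∈ J, ∀ g ∈ ballAlg d, g * f ∈ J)

/-- The self-map of the closed ball given by `z ↦ t z` for `‖t‖ ≤ 1`. -/
def dilatePt (d : ℕ) (t : ℂ) (ht : ‖t‖ ≤ 1) : C(CBall d, CBall d) :=
  ⟨fun z => ⟨t • (z : Cd d), by
      have hz : ‖(z : Cd d)‖ ≤ 1 := mem_closedBall_zero_iff.mp z.2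
      show t • (z : Cd d) ∈ Metric.closedBall 0 1
      rw [mem_closedBall_zero_iff, norm_smul]
      exact mul_le_one₀ ht (norm_nonneg _) hz⟩,
    by exact Continuous.subtype_mk (continuous_subtype_val.const_smul t) _⟩

/-- The dilation `f ↦ (z ↦ f (t z))` on continuous functions on the closed ball. -/
def dilateFn (d : ℕ) (t : ℂ) (ht : ‖t‖ ≤ 1) (f : C(CBall d, ℂ)) : C(CBall d, ℂ) :=
  f.comp (dilatePt d t ht)

/-- A closed ideal of the ball algebra is homogeneous if it is invariant under all
dilations `z ↦ t z`, `|t| < 1`. -/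
def IsHomogBallIdeal (d : ℕ) (J : Set C(CBall d, ℂ)) : Prop :=
  ∀ f ∈ J, ∀ t : ℂ, ∀ ht : ‖t‖ < 1, dilateFn d t ht.le f ∈ J

/-!
Let `I` be the ideal of polynomials whose restrictions lie in `J`; Noetherianity gives
`(√I) ^ N ≤ I` for some `N`. Averaging `ζ⁻ᵏ g (ζ z)` over the `m`-th roots of unity `ζ` and
letting `m → ∞` defines the `k`-th homogeneous component `g_k` of any `g` in the ball algebra,
and Abel summation `g (ρ z) = ∑ ρᵏ g_k z` recovers `g` as a limit of linear combinations of
its components. For `g ∈ J` the components lie in `I` (this is where homogeneity of `J` enters),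
so `J` lies in the closure of `I` and `I` is a homogeneous ideal. If `f ^ m ∈ J`, then `f`, and
hence each `f_k`, vanishes on the part of the cone `Z(I)` inside the ball; being homogeneous,
`f_k` vanishes on all of `Z(I)`, so `f_k ∈ √I` by the Nullstellensatz. Thus `f` is a limit of
elements of `√I` and `f ^ N` a limit of elements of `I`, hence lies in the closed set `J`.
-/

open Filter Topology

theorem MvPolynomial.IsHomogeneous.aeval_smul {σ R A : Type*} [CommSemiring R] [CommSemiring A]
    [Algebra R A] {φ : MvPolynomial σ R} {n : ℕ} (hφ : φ.IsHomogeneous n) (t : R) (x : σ → A) :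
    MvPolynomial.aeval (t • x) φ = t ^ n • MvPolynomial.aeval x φ := by
  simp only [aeval_def, eval₂_eq, Finset.smul_sum]
  refine Finset.sum_congr rfl fun s hs => ?_
  rw [hφ.degree_eq_sum_deg_support hs, ← Finset.prod_pow_eq_pow_sum, ← mul_smul_comm,
    ← Finset.prod_smul]
  simp only [Pi.smul_apply, smul_pow]

theorem MvPolynomial.sum_range_homogeneousComponent {σ R : Type*} [CommSemiring R]
    {φ : MvPolynomial σ R} {n : ℕ} (hn : φ.totalDegree < n) :
    ∑ i ∈ Finset.range n, homogeneousComponent i φ = φ := by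
  refine (Finset.sum_subset (Finset.range_subset_range.mpr hn) fun i _ hi => ?_).symm.trans
    (sum_homogeneousComponent φ)
  exact homogeneousComponent_eq_zero _ _ (by simp at hi; omega)

theorem MvPolynomial.smul_mem_zeroLocus {σ K : Type*} [Field K] {I : Ideal (MvPolynomial σ K)}
    (hI : ∀ p ∈ I, ∀ k, homogeneousComponent k p ∈ I) {x : σ → K} (hx : x ∈ zeroLocus K I)
    (t : K) : t • x ∈ zeroLocus K I := by
  intro p hp
  rw [← sum_homogeneousComponent p, map_sum]
  refine Finset.sum_eq_zero fun k _ => ?_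
  rw [(homogeneousComponent_isHomogeneous k p).aeval_smul, hx _ (hI p hp k), smul_zero]

theorem IsPrimitiveRoot.sum_pow_mul_inv_pow {K : Type*} [Field K] {ζ : K} {m k l : ℕ}
    (hζ : IsPrimitiveRoot ζ m) (hk : k < m) (hl : l < m) :
    ∑ j ∈ Finset.range m, (ζ ^ j) ^ l * ((ζ ^ j) ^ k)⁻¹ = if l = k then (m : K) else 0 := by
  have hζ0 : ζ ≠ 0 := hζ.ne_zero (by omega)
  have hterm : ∀ j : ℕ, (ζ ^ j) ^ l * ((ζ ^ j) ^ k)⁻¹ = (ζ ^ ((l : ℤ) - k)) ^ j := by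
    intro j
    rw [zpow_sub₀ hζ0, zpow_natCast, zpow_natCast, ← pow_mul, ← pow_mul, div_pow, div_eq_mul_inv,
      ← pow_mul, ← pow_mul, mul_comm j l, mul_comm j k]
  simp only [hterm]
  split_ifs with hlk
  · simp [hlk]
  · have hne : ζ ^ ((l : ℤ) - k) ≠ 1 := by
      rw [Ne, hζ.zpow_eq_one_iff_dvd]
      intro hdvd
      have := Int.eq_zero_of_abs_lt_dvd hdvd (by rw [abs_lt]; omega)
      omega
    rw [geom_sum_eq hne, ← zpow_natCast, ← zpow_mul, mul_comm, zpow_mul, zpow_natCast,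
      hζ.pow_eq_one, one_zpow, sub_self, zero_div]

variable {d : ℕ}

theorem polyMap_apply (p : MvPolynomial (Fin d) ℂ) (z : CBall d) :
    polyMap d p z = aeval (z : Cd d).ofLp p := by
  change ContinuousMap.evalAlgHom ℂ ℂ z (aeval (coordFn d) p) = _
  rw [← AlgHom.comp_apply, comp_aeval]
  rfl

-- Definitionally `dilateFn d t ht`, bundled so that the algebra-hom API applies.
def dilate (t : ℂ) (ht : ‖t‖ ≤ 1) : C(CBall d, ℂ) →ₐ[ℂ] C(CBall d, ℂ) :=
  ContinuousMap.compRightAlgHom ℂ ℂ (dilatePt d t ht)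

section dilate

variable {t : ℂ} {ht : ‖t‖ ≤ 1}

theorem dilate_apply (g : C(CBall d, ℂ)) (z : CBall d) :
    dilate t ht g z = g (dilatePt d t ht z) := rfl

theorem continuous_dilate : Continuous (dilate (d := d) t ht) :=
  ContinuousMap.compRightAlgHom_continuous ℂ ℂ _

theorem norm_dilate_le (g : C(CBall d, ℂ)) : ‖dilate t ht g‖ ≤ ‖g‖ :=
  (ContinuousMap.norm_le _ (norm_nonneg g)).mpr fun _ => g.norm_coe_le_norm _

theorem dilate_dilate {s : ℂ} (hs : ‖s‖ ≤ 1) (g : C(CBall d, ℂ)) :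
    dilate s hs (dilate t ht g) =
      dilate (t * s) (by rw [norm_mul]; exact mul_le_one₀ ht (norm_nonneg s) hs) g := by
  ext z
  simp only [dilate_apply]
  congr 1
  ext1
  exact smul_smul t s _

theorem dilate_polyMap (p : MvPolynomial (Fin d) ℂ) :
    dilate t ht (polyMap d p) = aeval (t • coordFn d) p := by
  rw [polyMap, ← AlgHom.comp_apply, comp_aeval]
  rfl

theorem dilate_polyMap_of_isHomogeneous {q : MvPolynomial (Fin d) ℂ} {k : ℕ}
    (hq : q.IsHomogeneous k) : dilate t ht (polyMap d q) = t ^ k • polyMap d q := by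
  rw [dilate_polyMap, hq.aeval_smul]
  rfl

theorem dilate_polyMap_eq_sum {p : MvPolynomial (Fin d) ℂ} {n : ℕ} (hn : p.totalDegree < n) :
    dilate t ht (polyMap d p) =
      ∑ l ∈ Finset.range n, t ^ l • polyMap d (homogeneousComponent l p) := by
  conv_lhs => rw [← sum_range_homogeneousComponent hn]
  simp only [map_sum, dilate_polyMap_of_isHomogeneous (homogeneousComponent_isHomogeneous _ p)]

end dilate

theorem dist_dilatePt_le {t : ℂ} (ht : ‖t‖ ≤ 1) (z : CBall d) :
    dist z (dilatePt d t ht z) ≤ ‖1 - t‖ := by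
  have hz : ‖(z : Cd d)‖ ≤ 1 := mem_closedBall_zero_iff.mp z.2
  rw [Subtype.dist_eq, dist_eq_norm]
  change ‖(z : Cd d) - t • (z : Cd d)‖ ≤ _
  rw [← one_smul ℂ (z : Cd d), smul_smul, mul_one, ← sub_smul, norm_smul]
  exact mul_le_of_le_one_right (norm_nonneg _) hz

theorem exists_dist_dilate_lt (g : C(CBall d, ℂ)) {ε : ℝ} (hε : 0 < ε) :
    ∃ t : ℂ, ∃ ht : ‖t‖ < 1, dist g (dilate t ht.le g) < ε := by
  obtain ⟨δ, hδ, hgδ⟩ := Metric.uniformContinuous_iff.mp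
    (CompactSpace.uniformContinuous_of_continuous g.continuous) (ε / 2) (half_pos hε)
  obtain ⟨s, hs0, hs1, hsδ⟩ : ∃ s : ℝ, 0 < s ∧ s ≤ 1 ∧ s < δ :=
    ⟨min (δ / 2) 1, by positivity, min_le_right _ _, (min_le_left _ _).trans_lt (half_lt_self hδ)⟩
  have ht : ‖((1 - s : ℝ) : ℂ)‖ < 1 := by
    rw [Complex.norm_real, Real.norm_of_nonneg (by linarith)]
    linarith
  have hs : ‖1 - ((1 - s : ℝ) : ℂ)‖ = s := by simp [abs_of_pos hs0]
  refine ⟨_, ht, ((ContinuousMap.dist_le (half_pos hε).le).mpr fun z => ?_).trans_lt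
    (half_lt_self hε)⟩
  exact (hgδ ((dist_dilatePt_le ht.le z).trans_lt (by rwa [hs]))).le

def primRoot (m : ℕ) : ℂ := Complex.exp (2 * Real.pi * Complex.I / m)

theorem norm_primRoot (m : ℕ) : ‖primRoot m‖ = 1 := by
  rw [primRoot, Complex.norm_exp]
  simp

theorem norm_primRoot_pow (m j : ℕ) : ‖primRoot m ^ j‖ = 1 := by
  rw [norm_pow, norm_primRoot, one_pow]

theorem isPrimitiveRoot_primRoot {m : ℕ} (hm : m ≠ 0) : IsPrimitiveRoot (primRoot m) m :=
  Complex.isPrimitiveRoot_exp m hm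

def rotAvg (k m : ℕ) : C(CBall d, ℂ) →ₗ[ℂ] C(CBall d, ℂ) :=
  (m : ℂ)⁻¹ • ∑ j ∈ Finset.range m,
    ((primRoot m ^ j) ^ k)⁻¹ • (dilate (primRoot m ^ j) (norm_primRoot_pow m j).le).toLinearMap

theorem rotAvg_apply (k m : ℕ) (g : C(CBall d, ℂ)) :
    rotAvg k m g = (m : ℂ)⁻¹ • ∑ j ∈ Finset.range m,
      ((primRoot m ^ j) ^ k)⁻¹ • dilate (primRoot m ^ j) (norm_primRoot_pow m j).le g := by
  simp [rotAvg]

theorem norm_rotAvg_le (k m : ℕ) (g : C(CBall d, ℂ)) : ‖rotAvg k m g‖ ≤ ‖g‖ := by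
  have hterm : ∀ j ∈ Finset.range m, ‖((primRoot m ^ j) ^ k)⁻¹ •
      dilate (primRoot m ^ j) (norm_primRoot_pow m j).le g‖ ≤ ‖g‖ := fun j _ => by
    simp only [norm_smul, norm_inv, norm_pow, norm_primRoot, one_pow, inv_one, one_mul]
    exact norm_dilate_le g
  rcases Nat.eq_zero_or_pos m with rfl | hm
  · simp [rotAvg]
  calc ‖rotAvg k m g‖ ≤ (m : ℝ)⁻¹ * (m * ‖g‖) := by
        rw [rotAvg_apply, norm_smul, norm_inv, Complex.norm_natCast]
        gcongr
        simpa using norm_sum_le_of_le _ hterm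
    _ = ‖g‖ := by field_simp

theorem rotAvg_polyMap {k m : ℕ} {p : MvPolynomial (Fin d) ℂ} (hp : p.totalDegree < m)
    (hk : k < m) : rotAvg k m (polyMap d p) = polyMap d (homogeneousComponent k p) := by
  have hζ := isPrimitiveRoot_primRoot (m := m) (by omega)
  have hcoef : ∀ l ∈ Finset.range m, ∑ j ∈ Finset.range m,
      (m : ℂ)⁻¹ * (((primRoot m ^ j) ^ k)⁻¹ * (primRoot m ^ j) ^ l) = if l = k then 1 else 0 := by
    intro l hl
    simp_rw [← Finset.mul_sum, mul_comm (_⁻¹ : ℂ)]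
    rw [hζ.sum_pow_mul_inv_pow hk (Finset.mem_range.mp hl)]
    split_ifs
    · exact mul_inv_cancel₀ (Nat.cast_ne_zero.mpr (by omega))
    · exact zero_mul _
  simp only [rotAvg_apply, dilate_polyMap_eq_sum hp, Finset.smul_sum, smul_smul]
  rw [Finset.sum_comm]
  simp only [← Finset.sum_smul]
  rw [Finset.sum_congr rfl fun l hl => by rw [hcoef l hl, ite_smul, one_smul, zero_smul],
    Finset.sum_ite_eq' _ _ _, if_pos (Finset.mem_range.mpr hk)]

theorem dist_rotAvg_polyMap_le {k m : ℕ} {p : MvPolynomial (Fin d) ℂ} (hp : p.totalDegree < m)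
    (hk : k < m) (g : C(CBall d, ℂ)) :
    dist (rotAvg k m g) (polyMap d (homogeneousComponent k p)) ≤ dist g (polyMap d p) := by
  rw [dist_eq_norm, dist_eq_norm, ← rotAvg_polyMap hp hk, ← map_sub]
  exact norm_rotAvg_le k m _

theorem cauchySeq_rotAvg {g : C(CBall d, ℂ)} (hg : g ∈ ballAlg d) (k : ℕ) :
    CauchySeq fun m => rotAvg k m g := by
  refine Metric.cauchySeq_iff'.mpr fun ε hε => ?_
  obtain ⟨_, ⟨p, rfl⟩, hgp⟩ := Metric.mem_closure_iff.mp hg (ε / 2) (half_pos hε)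
  refine ⟨max p.totalDegree k + 1, fun m hm => ?_⟩
  calc dist (rotAvg k m g) (rotAvg k (max p.totalDegree k + 1) g)
      ≤ dist g (polyMap d p) + dist g (polyMap d p) :=
        dist_triangle_right _ _ _ |>.trans <| add_le_add
          (dist_rotAvg_polyMap_le (by omega) (by omega) g)
          (dist_rotAvg_polyMap_le (by omega) (by omega) g)
    _ < ε := by linarith

/-- A junk value (`limUnder`) unless `g ∈ ballAlg d`, where the limit exists. -/
def homogComp (k : ℕ) (g : C(CBall d, ℂ)) : C(CBall d, ℂ) :=
  limUnder atTop fun m => rotAvg k m g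

section homogComp

variable {g : C(CBall d, ℂ)} (hg : g ∈ ballAlg d) (k : ℕ)
include hg

theorem tendsto_rotAvg_homogComp : Tendsto (fun m => rotAvg k m g) atTop (𝓝 (homogComp k g)) :=
  (cauchySeq_rotAvg hg k).tendsto_limUnder

theorem dist_homogComp_polyMap_le (p : MvPolynomial (Fin d) ℂ) :
    dist (homogComp k g) (polyMap d (homogeneousComponent k p)) ≤ dist g (polyMap d p) :=
  le_of_tendsto ((tendsto_rotAvg_homogComp hg k).dist tendsto_const_nhds) <|
    eventually_atTop.mpr ⟨max p.totalDegree k + 1, fun _ hm =>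
      dist_rotAvg_polyMap_le (by omega) (by omega) g⟩

theorem exists_isHomogeneous_polyMap_eq_homogComp :
    ∃ q : MvPolynomial (Fin d) ℂ, q.IsHomogeneous k ∧ polyMap d q = homogComp k g := by
  set H := (homogeneousSubmodule (Fin d) ℂ k).map (polyMap d).toLinearMap
  have : FiniteDimensional ℂ H :=
    Module.Finite.iff_fg.mpr ((homogeneousSubmodule_fg (Fin d) ℂ k).map _)
  have hmem : homogComp k g ∈ closure (H : Set C(CBall d, ℂ)) := by
    refine Metric.mem_closure_iff.mpr fun ε hε => ?_
    obtain ⟨_, ⟨p, rfl⟩, hgp⟩ := Metric.mem_closure_iff.mp hg ε hε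
    exact ⟨_, Submodule.mem_map_of_mem (homogeneousComponent_mem k p),
      (dist_homogComp_polyMap_le hg k p).trans_lt hgp⟩
  rw [H.closed_of_finiteDimensional.closure_eq] at hmem
  obtain ⟨q, hq, hqg⟩ := hmem
  exact ⟨q, hq, hqg⟩

theorem homogComp_apply_eq_zero {w : CBall d} (hw : ∀ t (ht : ‖t‖ ≤ 1), dilate t ht g w = 0) :
    homogComp k g w = 0 := by
  refine tendsto_nhds_unique (((continuous_eval_const w).tendsto _).comp
    (tendsto_rotAvg_homogComp hg k)) (tendsto_const_nhds.congr fun m => ?_)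
  simp [rotAvg_apply, hw]

end homogComp

theorem homogComp_polyMap (k : ℕ) (p : MvPolynomial (Fin d) ℂ) :
    homogComp k (polyMap d p) = polyMap d (homogeneousComponent k p) :=
  tendsto_nhds_unique (tendsto_rotAvg_homogComp (subset_closure ⟨p, rfl⟩) k) <|
    tendsto_atTop_of_eventually_const (i₀ := max p.totalDegree k + 1) fun _ hm =>
      rotAvg_polyMap (by omega) (by omega)

-- Rotations `|t| = 1` need not preserve `S`, so we average `z ↦ g (t z / 2)` instead and
-- read off `2⁻¹ ^ k • homogComp k g ∈ S`.
theorem homogComp_mem {S : Submodule ℂ C(CBall d, ℂ)} (hScl : IsClosed (S : Set C(CBall d, ℂ)))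
    (hShom : IsHomogBallIdeal d S) {g : C(CBall d, ℂ)} (hg : g ∈ ballAlg d) (hgS : g ∈ S)
    (k : ℕ) : homogComp k g ∈ S := by
  have hr : ‖(2⁻¹ : ℂ)‖ < 1 := by norm_num
  have hdil : ∀ m, dilate 2⁻¹ hr.le (rotAvg k m g) ∈ S := fun m => by
    simp only [rotAvg_apply, map_smul, map_sum, dilate_dilate]
    refine S.smul_mem _ (S.sum_mem fun j _ => S.smul_mem _ (hShom g hgS _ ?_))
    rw [norm_mul, norm_primRoot_pow, one_mul]
    exact hr
  obtain ⟨q, hq, hqg⟩ := exists_isHomogeneous_polyMap_eq_homogComp hg k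
  have hlim := hScl.mem_of_tendsto (((continuous_dilate).tendsto _).comp
    (tendsto_rotAvg_homogComp hg k)) (Eventually.of_forall hdil)
  rw [← hqg] at hlim ⊢
  rw [dilate_polyMap_of_isHomogeneous hq] at hlim
  exact (S.smul_mem_iff (pow_ne_zero k (by norm_num))).mp hlim

theorem dist_sum_homogComp_le {g : C(CBall d, ℂ)} (hg : g ∈ ballAlg d)
    (p : MvPolynomial (Fin d) ℂ) {t : ℂ} (ht : ‖t‖ < 1) (n : ℕ) :
    dist (∑ k ∈ Finset.range n, t ^ k • homogComp k g)
        (∑ k ∈ Finset.range n, t ^ k • polyMap d (homogeneousComponent k p)) ≤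
      dist g (polyMap d p) / (1 - ‖t‖) := by
  rw [dist_eq_norm, ← Finset.sum_sub_distrib]
  calc _ ≤ ∑ k ∈ Finset.range n, ‖t‖ ^ k * dist g (polyMap d p) := by
        refine norm_sum_le_of_le _ fun k _ => ?_
        rw [← smul_sub, norm_smul, norm_pow, ← dist_eq_norm]
        gcongr
        exact dist_homogComp_polyMap_le hg k p
    _ ≤ dist g (polyMap d p) / (1 - ‖t‖) := by
        rw [← Finset.sum_mul, div_eq_mul_inv, mul_comm]
        gcongr
        simpa using geom_sum_Ico_le_of_lt_one (m := 0) (n := n) (norm_nonneg t) ht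

theorem tendsto_sum_homogComp {g : C(CBall d, ℂ)} (hg : g ∈ ballAlg d) {t : ℂ} (ht : ‖t‖ < 1) :
    Tendsto (fun n => ∑ k ∈ Finset.range n, t ^ k • homogComp k g) atTop
      (𝓝 (dilate t ht.le g)) := by
  refine Metric.tendsto_atTop.mpr fun ε hε => ?_
  have hC : 0 < 1 + (1 - ‖t‖)⁻¹ := by have := sub_pos.mpr ht; positivity
  obtain ⟨_, ⟨p, rfl⟩, hgp⟩ := Metric.mem_closure_iff.mp hg _ (div_pos hε hC)
  refine ⟨p.totalDegree + 1, fun n hn => ?_⟩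
  have hdil : dist (dilate t ht.le (polyMap d p)) (dilate t ht.le g) ≤ dist g (polyMap d p) := by
    rw [dist_comm, dist_eq_norm, dist_eq_norm, ← map_sub]
    exact norm_dilate_le _
  have hsum := dist_sum_homogComp_le hg p ht n
  rw [← dilate_polyMap_eq_sum (ht := ht.le) (by omega)] at hsum
  calc _ ≤ dist g (polyMap d p) / (1 - ‖t‖) + dist g (polyMap d p) :=
        (dist_triangle _ _ _).trans (add_le_add hsum hdil)
    _ = dist g (polyMap d p) * (1 + (1 - ‖t‖)⁻¹) := by ring
    _ < ε := (lt_div_iff₀ hC).mp hgp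

theorem mem_closure_image_of_homogComp_mem (I : Ideal (MvPolynomial (Fin d) ℂ))
    {g : C(CBall d, ℂ)} (hg : g ∈ ballAlg d) (hI : ∀ k, ∃ q ∈ I, polyMap d q = homogComp k g) :
    g ∈ closure (polyMap d '' I) := by
  choose q hqI hqg using hI
  refine Metric.mem_closure_iff.mpr fun ε hε => ?_
  obtain ⟨t, ht, hdil⟩ := exists_dist_dilate_lt g (half_pos hε)
  obtain ⟨n, hn⟩ := Metric.tendsto_atTop.mp (tendsto_sum_homogComp hg ht) _ (half_pos hε)
  refine ⟨_, ⟨∑ k ∈ Finset.range n, t ^ k • q k,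
    I.sum_mem fun k _ => I.smul_of_tower_mem _ (hqI k), rfl⟩, ?_⟩
  simp only [map_sum, map_smul, hqg]
  calc _ ≤ _ := dist_triangle_right _ _ (dilate t ht.le g)
    _ < ε / 2 + ε / 2 := add_lt_add hdil (hn n le_rfl)
    _ = ε := add_halves ε

theorem apply_eq_zero_of_mem_closure {I : Ideal (MvPolynomial (Fin d) ℂ)} {g : C(CBall d, ℂ)}
    (hg : g ∈ closure (polyMap d '' I)) {w : CBall d} (hw : (w : Cd d).ofLp ∈ zeroLocus ℂ I) :
    g w = 0 := by
  refine closure_minimal ?_ (isClosed_eq (continuous_eval_const w) continuous_const) hg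
  rintro _ ⟨p, hp, rfl⟩
  exact (polyMap_apply p w).trans (hw p hp)

theorem mem_radical_of_isHomogeneous {I : Ideal (MvPolynomial (Fin d) ℂ)}
    (hI : ∀ p ∈ I, ∀ k, homogeneousComponent k p ∈ I) {q : MvPolynomial (Fin d) ℂ} {k : ℕ}
    (hq : q.IsHomogeneous k)
    (hqI : ∀ w : CBall d, (w : Cd d).ofLp ∈ zeroLocus ℂ I → polyMap d q w = 0) :
    q ∈ I.radical := by
  rw [← vanishingIdeal_zeroLocus_eq_radical (K := ℂ)]
  intro x hx
  set c : ℝ := ‖WithLp.toLp 2 x‖ + 1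
  have hc : 0 < c := by positivity
  have hw : (c⁻¹ : ℂ) • WithLp.toLp 2 x ∈ CBall d := by
    rw [mem_closedBall_zero_iff, norm_smul, norm_inv, Complex.norm_real, Real.norm_of_nonneg hc.le,
      inv_mul_le_one₀ hc]
    linarith
  have hx' : x = (c : ℂ) • (c⁻¹ : ℂ) • x := by
    rw [smul_smul, mul_inv_cancel₀ (by exact_mod_cast hc.ne'), one_smul]
  have hqw : aeval ((c⁻¹ : ℂ) • x) q = 0 := by
    simpa [polyMap_apply] using hqI ⟨_, hw⟩ (smul_mem_zeroLocus hI hx _)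
  rw [hx', hq.aeval_smul, hqw, smul_zero]

namespace IsIdealOfBallAlg

variable {J : Set C(CBall d, ℂ)} (hJ : IsIdealOfBallAlg d J)
include hJ

theorem smul_mem (c : ℂ) {g : C(CBall d, ℂ)} (hg : g ∈ J) : c • g ∈ J := by
  have := hJ.2.2.2 g hg (polyMap d (C c)) (subset_closure ⟨C c, rfl⟩)
  rwa [polyMap, aeval_C, ← Algebra.smul_def] at this

def toSubmodule : Submodule ℂ C(CBall d, ℂ) where
  carrier := J
  add_mem' ha hb := hJ.2.2.1 _ ha _ hb
  zero_mem' := hJ.2.1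
  smul_mem' := hJ.smul_mem

def polyIdeal : Ideal (MvPolynomial (Fin d) ℂ) where
  carrier := {p | polyMap d p ∈ J}
  add_mem' {p q} hp hq := show polyMap d (p + q) ∈ J by
    rw [map_add]; exact hJ.2.2.1 _ hp _ hq
  zero_mem' := show polyMap d 0 ∈ J by rw [map_zero]; exact hJ.2.1
  smul_mem' c p hp := show polyMap d (c * p) ∈ J by
    rw [map_mul]; exact hJ.2.2.2 _ hp _ (subset_closure ⟨c, rfl⟩)

theorem mem_polyIdeal {p : MvPolynomial (Fin d) ℂ} : p ∈ hJ.polyIdeal ↔ polyMap d p ∈ J :=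
  Iff.rfl

variable (hJcl : IsClosed J) (hJhom : IsHomogBallIdeal d J)
include hJcl hJhom

theorem homogComp_mem {g : C(CBall d, ℂ)} (hg : g ∈ J) (k : ℕ) : homogComp k g ∈ J :=
  _root_.homogComp_mem (S := hJ.toSubmodule) hJcl hJhom (hJ.1 hg) hg k

theorem homogeneousComponent_mem_polyIdeal {p : MvPolynomial (Fin d) ℂ}
    (hp : p ∈ hJ.polyIdeal) (k : ℕ) : homogeneousComponent k p ∈ hJ.polyIdeal := by
  rw [mem_polyIdeal, ← homogComp_polyMap]
  exact hJ.homogComp_mem hJcl hJhom hp k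

theorem mem_closure_image_polyIdeal {g : C(CBall d, ℂ)} (hg : g ∈ J) :
    g ∈ closure (polyMap d '' hJ.polyIdeal) :=
  mem_closure_image_of_homogComp_mem _ (hJ.1 hg) fun k => by
    obtain ⟨q, -, hq⟩ := exists_isHomogeneous_polyMap_eq_homogComp (hJ.1 hg) k
    exact ⟨q, by rw [mem_polyIdeal, hq]; exact hJ.homogComp_mem hJcl hJhom hg k, hq⟩

theorem homogComp_mem_radical {f : C(CBall d, ℂ)} (hf : f ∈ ballAlg d) {m : ℕ} (hm : m ≠ 0)
    (hfm : f ^ m ∈ J) (k : ℕ) : ∃ q ∈ hJ.polyIdeal.radical, polyMap d q = homogComp k f := by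
  have hI := fun p (hp : p ∈ hJ.polyIdeal) => hJ.homogeneousComponent_mem_polyIdeal hJcl hJhom hp
  have hfw : ∀ w : CBall d, (w : Cd d).ofLp ∈ zeroLocus ℂ hJ.polyIdeal → f w = 0 := fun w hw =>
    (pow_eq_zero_iff hm).mp <|
      apply_eq_zero_of_mem_closure (hJ.mem_closure_image_polyIdeal hJcl hJhom hfm) hw
  obtain ⟨q, hq, hqf⟩ := exists_isHomogeneous_polyMap_eq_homogComp hf k
  refine ⟨q, mem_radical_of_isHomogeneous hI hq fun w hw => ?_, hqf⟩
  rw [hqf]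
  exact homogComp_apply_eq_zero hf k fun t ht => hfw _ (smul_mem_zeroLocus hI hw t)

end IsIdealOfBallAlg

/-- effective radical membership in the ball algebra. For every
closed homogeneous ideal `J` of the ball algebra `B` there is an `N ∈ ℕ` such that
`f^N ∈ J` whenever `f ∈ √J`, i.e. whenever `f ∈ B` and `f^m ∈ J` for some `m ≥ 1`. -/
theorem stmt11 (d : ℕ) (J : Set C(CBall d, ℂ))
    (hJ : IsIdealOfBallAlg d J) (hJcl : IsClosed J) (hJhom : IsHomogBallIdeal d J) :
    ∃ N : ℕ, ∀ f ∈ ballAlg d, (∃ m : ℕ, 1 ≤ m ∧ f ^ m ∈ J) → f ^ N ∈ J := by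
  obtain ⟨N, hN⟩ := Ideal.exists_radical_pow_le_of_fg hJ.polyIdeal (IsNoetherian.noetherian _)
  refine ⟨N, fun f hf ⟨m, hm, hfm⟩ => hJcl.closure_subset ?_⟩
  have hrad := mem_closure_image_of_homogComp_mem _ hf
    (hJ.homogComp_mem_radical hJcl hJhom hf (by omega) hfm)
  refine map_mem_closure (f := (· ^ N)) (continuous_pow N) hrad ?_
  rintro _ ⟨p, hp, rfl⟩
  change polyMap d p ^ N ∈ J
  rw [← map_pow]
  exact hN (Ideal.pow_mem_pow hp N)
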